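/- arXiv:2102.01663 — 8 statements merged into one kernel-verified Lean document; each statement's English description precedes it below -/
import Mathlib

section
/- Let q ≥ 2 be an even integer, ζ = exp(2πi/(q+1)), and c_1, c_2, c_3 integers with 1 ≤ c_i ≤ q/2. Define S = (q-1)²/(q(q+1)) - 1/q - (1/(q+1)) Σ_{k=1}^{q/2} (ζ^{k c_1} + ζ^{-k c_1})(ζ^{k c_2} + ζ^{-k c_2})(ζ^{k c_3} + ζ^{-k c_3}). Then S = 0 if c_1 + c_2 + c_3 = q+1 or c_1 + c_2 + c_3 = 2·max(c_1,c_2,c_3), and S = 1 otherwise. -/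
/-!
With `ζ` a primitive `(q+1)`-th root of unity, product-to-sum turns each summand into four terms
`ζ^(k m) + ζ^(-k m)` with `m = c₁ ± c₂ ± c₃`. Since `q` is even, `k ↦ q + 1 - k` matches the negative
exponents over `1 ≤ k ≤ q/2` with the positive ones over `q/2 < k ≤ q`, so each of the four sums is a
full geometric sum over `ℤ/(q+1)` minus its `k = 0` term: `q` if `q + 1 ∣ m` and `-1` otherwise. The
bounds on the `cᵢ` allow at most one of the four divisibilities, and it holds exactly under the stated
condition. The four `-1`s combine with the codegree terms into
`(q-1)²/(q(q+1)) - 1/q + 4/(q+1) = 1`.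
-/

open Finset

section

variable {K : Type*} [Field K]

theorem IsPrimitiveRoot.sum_range_zpow_mul {ζ : K} {n : ℕ} (hζ : IsPrimitiveRoot ζ n) (m : ℤ) :
    ∑ k ∈ range n, ζ ^ ((k : ℤ) * m) = if (n : ℤ) ∣ m then (n : K) else 0 := by
  simp_rw [mul_comm _ m, zpow_mul, zpow_natCast]
  split_ifs with h
  · simp [(hζ.zpow_eq_one_iff_dvd m).mpr h]
  · have hpow : (ζ ^ m) ^ n = 1 := by
      rw [← zpow_natCast, ← zpow_mul, mul_comm, zpow_mul, zpow_natCast, hζ.pow_eq_one, one_zpow]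
    rw [geom_sum_eq (mt (hζ.zpow_eq_one_iff_dvd m).mp h), hpow, sub_self, zero_div]

theorem IsPrimitiveRoot.sum_Icc_half_zpow_add_zpow_neg {ζ : K} {q : ℕ}
    (hζ : IsPrimitiveRoot ζ (q + 1)) (hq : Even q) (m : ℤ) :
    ∑ k ∈ Icc 1 (q / 2), (ζ ^ ((k : ℤ) * m) + ζ ^ (-((k : ℤ) * m))) =
      (if ((q : ℤ) + 1) ∣ m then (q : K) + 1 else 0) - 1 := by
  obtain ⟨t, rfl⟩ := hq
  have hne : ζ ≠ 0 := hζ.ne_zero (t + t).succ_ne_zero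
  have reflect : ∑ k ∈ Ioc 0 t, ζ ^ (-((k : ℤ) * m)) = ∑ k ∈ Ioc t (t + t), ζ ^ ((k : ℤ) * m) := by
    refine sum_nbij' (fun k ↦ t + t + 1 - k) (fun k ↦ t + t + 1 - k) ?_ ?_ ?_ ?_ ?_ <;>
      intro k hk <;> simp only [mem_Ioc] at hk ⊢ <;> try omega
    · have hcast : ((t + t + 1 - k : ℕ) : ℤ) * m = ((t + t + 1 : ℕ) : ℤ) * m + -((k : ℤ) * m) := by
        push_cast [show k ≤ t + t + 1 by omega]; ring
      rw [hcast, zpow_add₀ hne, zpow_mul, zpow_natCast, hζ.pow_eq_one, one_zpow, one_mul]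
  have total := hζ.sum_range_zpow_mul m
  rw [Nat.range_succ_eq_Icc_zero, Icc_eq_cons_Ioc (Nat.zero_le _), sum_cons,
    ← sum_Ioc_consecutive _ (Nat.zero_le t) (Nat.le_add_left t t), ← reflect] at total
  rw [show (t + t) / 2 = t by omega, show Icc 1 t = Ioc 0 t from Icc_add_one_left_eq_Ioc 0 t,
    sum_add_distrib]
  push_cast at total ⊢
  rw [zero_mul, zpow_zero] at total
  linear_combination total

theorem zpow_add_zpow_neg_product_to_sum {ζ : K} (hζ : ζ ≠ 0) (k a b c : ℤ) :
    (ζ ^ (k * a) + ζ ^ (-(k * a))) * (ζ ^ (k * b) + ζ ^ (-(k * b))) *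
        (ζ ^ (k * c) + ζ ^ (-(k * c))) =
      (ζ ^ (k * (a + b + c)) + ζ ^ (-(k * (a + b + c)))) +
        (ζ ^ (k * (a + b - c)) + ζ ^ (-(k * (a + b - c)))) +
        (ζ ^ (k * (a - b + c)) + ζ ^ (-(k * (a - b + c)))) +
        (ζ ^ (k * (a - b - c)) + ζ ^ (-(k * (a - b - c)))) := by
  simp only [mul_add, mul_sub, zpow_add₀ hζ, zpow_sub₀ hζ, zpow_neg]
  field_simp
  ring

end

theorem sum_ite_dvd_signed_sums {M : Type*} [AddMonoid M] {q a b c : ℕ}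
    (ha : 1 ≤ a ∧ a ≤ q / 2) (hb : 1 ≤ b ∧ b ≤ q / 2) (hc : 1 ≤ c ∧ c ≤ q / 2) (x : M) :
    (if (q : ℤ) + 1 ∣ (a : ℤ) + b + c then x else 0) +
        (if (q : ℤ) + 1 ∣ (a : ℤ) + b - c then x else 0) +
        (if (q : ℤ) + 1 ∣ (a : ℤ) - b + c then x else 0) +
        (if (q : ℤ) + 1 ∣ (a : ℤ) - b - c then x else 0) =
      if a + b + c = q + 1 ∨ a + b + c = 2 * max (max a b) c then x else 0 := by
  have dvd_iff (m : ℤ) (hm : |m| < q + 1) : (q : ℤ) + 1 ∣ m ↔ m = 0 :=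
    ⟨fun h ↦ Int.eq_zero_of_abs_lt_dvd h hm, by rintro rfl; exact dvd_zero _⟩
  have h₁ : (q : ℤ) + 1 ∣ (a : ℤ) + b + c ↔ a + b + c = q + 1 := by
    rw [← dvd_sub_self_right, dvd_iff _ (by rw [abs_lt]; omega)]; omega
  have h₂ : (q : ℤ) + 1 ∣ (a : ℤ) + b - c ↔ c = a + b := by
    rw [dvd_iff _ (by rw [abs_lt]; omega)]; omega
  have h₃ : (q : ℤ) + 1 ∣ (a : ℤ) - b + c ↔ b = a + c := by
    rw [dvd_iff _ (by rw [abs_lt]; omega)]; omega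
  have h₄ : (q : ℤ) + 1 ∣ (a : ℤ) - b - c ↔ a = b + c := by
    rw [dvd_iff _ (by rw [abs_lt]; omega)]; omega
  simp only [h₁, h₂, h₃, h₄]
  split_ifs <;> first | omega | simp

theorem stmt_4_general (q : ℕ) (hqe : Even q) (c : Fin 3 → ℕ)
    (hc : ∀ i, 1 ≤ c i ∧ c i ≤ q / 2) :
    ((q : ℂ) - 1) ^ 2 / ((q : ℂ) * ((q : ℂ) + 1)) - 1 / (q : ℂ)
        - (1 / ((q : ℂ) + 1)) * ∑ k ∈ Finset.Icc 1 (q / 2),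
            ∏ i : Fin 3,
              (Complex.exp (2 * Real.pi * Complex.I / (q + 1)) ^ ((k : ℤ) * (c i : ℤ)) +
               Complex.exp (2 * Real.pi * Complex.I / (q + 1)) ^ (-((k : ℤ) * (c i : ℤ)))) =
      if c 0 + c 1 + c 2 = q + 1 ∨ c 0 + c 1 + c 2 = 2 * max (max (c 0) (c 1)) (c 2)
      then 0 else 1 := by
  have hζ : IsPrimitiveRoot (Complex.exp (2 * Real.pi * Complex.I / (q + 1))) (q + 1) := by
    simpa using Complex.isPrimitiveRoot_exp (q + 1) q.succ_ne_zero
  have hq : (q : ℂ) ≠ 0 := by have := hc 0; norm_cast; omega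
  have hq' : (q : ℂ) + 1 ≠ 0 := by norm_cast
  simp only [Fin.prod_univ_three, zpow_add_zpow_neg_product_to_sum (hζ.ne_zero q.succ_ne_zero),
    sum_add_distrib, hζ.sum_Icc_half_zpow_add_zpow_neg hqe]
  have count := sum_ite_dvd_signed_sums (hc 0) (hc 1) (hc 2) ((q : ℂ) + 1)
  rw [show ∀ w x y z : ℂ, (w - 1) + (x - 1) + (y - 1) + (z - 1) = (w + x + y + z) - 4 by
    intros; ring, count]
  split_ifs <;> field_simp <;> ring

theorem stmt_4 (q : ℕ) (hq : 2 ≤ q) (hqe : Even q) (c : Fin 3 → ℕ)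
    (hc : ∀ i, 1 ≤ c i ∧ c i ≤ q / 2) :
    ((q : ℂ) - 1) ^ 2 / ((q : ℂ) * ((q : ℂ) + 1)) - 1 / (q : ℂ)
        - (1 / ((q : ℂ) + 1)) * ∑ k ∈ Finset.Icc 1 (q / 2),
            ∏ i : Fin 3,
              (Complex.exp (2 * Real.pi * Complex.I / (q + 1)) ^ ((k : ℤ) * (c i : ℤ)) +
               Complex.exp (2 * Real.pi * Complex.I / (q + 1)) ^ (-((k : ℤ) * (c i : ℤ)))) =
      if c 0 + c 1 + c 2 = q + 1 ∨ c 0 + c 1 + c 2 = 2 * max (max (c 0) (c 1)) (c 2)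
      then 0 else 1 :=
  stmt_4_general q hqe c hc
end

section
/- Let q ≥ 2 be an even integer, ζ = exp(2πi/(q-1)), and c_1, c_2, c_3 integers with 1 ≤ c_i ≤ (q-2)/2. Define S = (q+1)²/(q(q-1)) + 1/q + (1/(q-1)) Σ_{k=1}^{(q-2)/2} (ζ^{k c_1} + ζ^{-k c_1})(ζ^{k c_2} + ζ^{-k c_2})(ζ^{k c_3} + ζ^{-k c_3}). Then S = 2 if c_1 + c_2 + c_3 = q-1 or c_1 + c_2 + c_3 = 2·max(c_1,c_2,c_3), and S = 1 otherwise. -/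
/-! With `n = q - 1 = 2m + 1` and `ζ` a primitive `n`-th root of unity, the summand is invariant
under `k ↦ n - k`, so the sum over `1 ≤ k ≤ m` is half of the full sum over `k < n` minus its
`k = 0` term `8`. Expanding the product via `2cos a · 2cos b = 2cos (a + b) + 2cos (a - b)`, the
full sum is `2n` times the number of the four sums `c₀ ± c₁ ± c₂` divisible by `n`. Since
`1 ≤ cᵢ ≤ m`, this happens only when `c₀ + c₁ + c₂ = n` or when one `cᵢ` is the sum of the other
two, and at most one of these holds. -/

open Finset

theorem zpow_add_zpow_neg_mul {K : Type*} [Field K] {x : K} (hx : x ≠ 0) (a b : ℤ) :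
    (x ^ a + x ^ (-a)) * (x ^ b + x ^ (-b)) =
      (x ^ (a + b) + x ^ (-(a + b))) + (x ^ (a - b) + x ^ (-(a - b))) := by
  simp only [zpow_add₀ hx, zpow_sub₀ hx, zpow_neg, mul_inv]
  field_simp
  ring

theorem inv_zpow_add_zpow_neg {K : Type*} [DivisionRing K] (x : K) (a : ℤ) :
    x⁻¹ ^ a + x⁻¹ ^ (-a) = x ^ a + x ^ (-a) := by
  rw [inv_zpow', inv_zpow', neg_neg, add_comm]

theorem Int.dvd_iff_eq_zero_of_lt {n s : ℤ} (hs : -n < s) (hs' : s < n) : n ∣ s ↔ s = 0 :=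
  ⟨fun h => Int.eq_zero_of_abs_lt_dvd h (abs_lt.mpr ⟨hs, hs'⟩), fun h => h ▸ dvd_zero n⟩

theorem Int.dvd_iff_eq_of_pos_of_lt_two_mul {n s : ℤ} (hs : 0 < s) (hs' : s < 2 * n) :
    n ∣ s ↔ s = n := by
  rw [← dvd_sub_self_right, Int.dvd_iff_eq_zero_of_lt (by omega) (by omega), sub_eq_zero]

theorem sum_range_two_mul_add_one_of_reflect {M : Type*} [AddCommMonoid M] (m : ℕ) (g : ℕ → M)
    (hg : ∀ k ∈ Icc 1 m, g (2 * m + 1 - k) = g k) :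
    ∑ k ∈ range (2 * m + 1), g k = g 0 + 2 • ∑ k ∈ Icc 1 m, g k := by
  have hIcc : ∑ k ∈ Icc 1 m, g k = ∑ k ∈ range m, g (k + 1) := by
    rw [range_eq_Ico, sum_Ico_add' g, zero_add, Ico_add_one_right_eq_Icc]
  have hupper : ∑ k ∈ range m, g (m + k + 1) = ∑ k ∈ range m, g (k + 1) := by
    rw [← sum_range_reflect]
    refine sum_congr rfl fun k hk => ?_
    have hk := mem_range.mp hk
    rw [← hg (k + 1) (mem_Icc.mpr ⟨by omega, by omega⟩)]
    congr 1
    omega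
  rw [sum_range_succ', add_comm, two_mul, sum_range_add, hupper, hIcc, two_nsmul]

theorem IsPrimitiveRoot.sum_range_pow_zpow {K : Type*} [Field K] {ζ : K} {n : ℕ}
    (hζ : IsPrimitiveRoot ζ n) (s : ℤ) :
    ∑ k ∈ range n, (ζ ^ k) ^ s = if (n : ℤ) ∣ s then (n : K) else 0 := by
  have hcomm (k : ℕ) : (ζ ^ k) ^ s = (ζ ^ s) ^ k := by
    rw [← zpow_natCast, ← zpow_mul, mul_comm, zpow_mul, zpow_natCast]
  simp only [hcomm]
  split_ifs with hs
  · simp [(hζ.zpow_eq_one_iff_dvd s).mpr hs]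
  · have hne : ζ ^ s ≠ 1 := fun h => hs ((hζ.zpow_eq_one_iff_dvd s).mp h)
    rw [geom_sum_eq hne, ← hcomm, hζ.pow_eq_one, one_zpow, sub_self, zero_div]

theorem IsPrimitiveRoot.sum_range_pow_zpow_add_zpow_neg {K : Type*} [Field K] {ζ : K} {n : ℕ}
    (hζ : IsPrimitiveRoot ζ n) (s : ℤ) :
    ∑ k ∈ range n, ((ζ ^ k) ^ s + (ζ ^ k) ^ (-s)) = if (n : ℤ) ∣ s then 2 * (n : K) else 0 := by
  simp only [sum_add_distrib, hζ.sum_range_pow_zpow, dvd_neg]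
  split_ifs <;> ring

theorem IsPrimitiveRoot.sum_range_eq_add_two_nsmul_sum_Icc {K M : Type*} [Field K]
    [AddCommMonoid M] {ζ : K} {m : ℕ} (hζ : IsPrimitiveRoot ζ (2 * m + 1)) (F : K → M)
    (hF : ∀ x, F x⁻¹ = F x) :
    ∑ k ∈ range (2 * m + 1), F (ζ ^ k) = F 1 + 2 • ∑ k ∈ Icc 1 m, F (ζ ^ k) := by
  rw [sum_range_two_mul_add_one_of_reflect m (fun k => F (ζ ^ k)), pow_zero]
  intro k hk
  have hkn : k ≤ 2 * m + 1 := by have := mem_Icc.mp hk; omega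
  have hinv : ζ ^ (2 * m + 1 - k) = (ζ ^ k)⁻¹ :=
    eq_inv_of_mul_eq_one_left (by rw [← pow_add, Nat.sub_add_cancel hkn, hζ.pow_eq_one])
  rw [hinv, hF]

theorem IsPrimitiveRoot.sum_range_prod_three_zpow_add_zpow_neg {K : Type*} [Field K] {ζ : K}
    {m : ℕ} (hζ : IsPrimitiveRoot ζ (2 * m + 1)) (c : Fin 3 → ℕ)
    (hc : ∀ i, 1 ≤ c i ∧ c i ≤ m) :
    ∑ k ∈ range (2 * m + 1), ∏ i, ((ζ ^ k) ^ (c i : ℤ) + (ζ ^ k) ^ (-(c i : ℤ))) =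
      if c 0 + c 1 + c 2 = 2 * m + 1 ∨ c 0 + c 1 + c 2 = 2 * max (max (c 0) (c 1)) (c 2)
      then 2 * ((2 * m + 1 : ℕ) : K) else 0 := by
  have hζ0 (k : ℕ) : ζ ^ k ≠ 0 := pow_ne_zero k (hζ.ne_zero (by omega))
  simp only [Fin.prod_univ_three, zpow_add_zpow_neg_mul (hζ0 _), add_mul, sum_add_distrib,
    hζ.sum_range_pow_zpow_add_zpow_neg]
  have hc0 := hc 0
  have hc1 := hc 1
  have hc2 := hc 2
  simp (disch := omega) only [Int.dvd_iff_eq_of_pos_of_lt_two_mul, Int.dvd_iff_eq_zero_of_lt]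
  split_ifs <;> first | omega | ring

theorem stmt_5_general (q : ℕ) (hqe : Even q) (c : Fin 3 → ℕ)
    (hc : ∀ i, 1 ≤ c i ∧ c i ≤ (q - 2) / 2) :
    ((q : ℂ) + 1) ^ 2 / ((q : ℂ) * ((q : ℂ) - 1)) + 1 / (q : ℂ)
        + (1 / ((q : ℂ) - 1)) * ∑ k ∈ Finset.Icc 1 ((q - 2) / 2),
            ∏ i : Fin 3,
              (Complex.exp (2 * Real.pi * Complex.I / (q - 1)) ^ ((k : ℤ) * (c i : ℤ)) +
               Complex.exp (2 * Real.pi * Complex.I / (q - 1)) ^ (-((k : ℤ) * (c i : ℤ)))) =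
      if c 0 + c 1 + c 2 = q - 1 ∨ c 0 + c 1 + c 2 = 2 * max (max (c 0) (c 1)) (c 2)
      then 2 else 1 := by
  obtain ⟨m, rfl⟩ : ∃ m, q = 2 * m + 2 := by
    obtain ⟨r, rfl⟩ := hqe
    exact ⟨r - 1, by have := hc 0; omega⟩
  rw [show (2 * m + 2 - 2) / 2 = m by omega] at hc ⊢
  have hq1 : ((2 * m + 2 : ℕ) : ℂ) - 1 = ((2 * m + 1 : ℕ) : ℂ) := by push_cast; ring
  rw [hq1, show 2 * m + 2 - 1 = 2 * m + 1 by omega]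
  set ζ := Complex.exp (2 * Real.pi * Complex.I / ((2 * m + 1 : ℕ) : ℂ))
  have hζ : IsPrimitiveRoot ζ (2 * m + 1) := Complex.isPrimitiveRoot_exp _ (by omega)
  set F : ℂ → ℂ := fun x => ∏ i, (x ^ (c i : ℤ) + x ^ (-(c i : ℤ)))
  have hF : ∀ x, F x⁻¹ = F x := fun x => by simp only [F, inv_zpow_add_zpow_neg]
  have hF1 : F 1 = 8 := by norm_num [F]
  have htotal := hζ.sum_range_prod_three_zpow_add_zpow_neg c hc
  rw [hζ.sum_range_eq_add_two_nsmul_sum_Icc F hF, hF1] at htotal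
  have hsum : ∑ k ∈ Icc 1 m, ∏ i : Fin 3,
      (ζ ^ ((k : ℤ) * (c i : ℤ)) + ζ ^ (-((k : ℤ) * (c i : ℤ)))) = ∑ k ∈ Icc 1 m, F (ζ ^ k) :=
    sum_congr rfl fun k _ => prod_congr rfl fun i _ => by
      rw [← mul_neg, zpow_mul, zpow_mul, zpow_natCast ζ k]
  rw [hsum]
  generalize ∑ k ∈ Icc 1 m, F (ζ ^ k) = S at htotal ⊢
  push_cast at htotal ⊢
  have hm1 : (2 * m + 1 : ℂ) ≠ 0 := by norm_cast
  have hm2 : (2 * m + 2 : ℂ) ≠ 0 := by norm_cast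
  split_ifs at htotal ⊢
  · obtain rfl : S = 2 * m - 3 := by linear_combination htotal / 2
    field_simp
    ring
  · obtain rfl : S = -4 := by linear_combination htotal / 2
    field_simp
    ring

theorem stmt_5 (q : ℕ) (hq : 2 ≤ q) (hqe : Even q) (c : Fin 3 → ℕ)
    (hc : ∀ i, 1 ≤ c i ∧ c i ≤ (q - 2) / 2) :
    ((q : ℂ) + 1) ^ 2 / ((q : ℂ) * ((q : ℂ) - 1)) + 1 / (q : ℂ)
        + (1 / ((q : ℂ) - 1)) * ∑ k ∈ Finset.Icc 1 ((q - 2) / 2),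
            ∏ i : Fin 3,
              (Complex.exp (2 * Real.pi * Complex.I / (q - 1)) ^ ((k : ℤ) * (c i : ℤ)) +
               Complex.exp (2 * Real.pi * Complex.I / (q - 1)) ^ (-((k : ℤ) * (c i : ℤ)))) =
      if c 0 + c 1 + c 2 = q - 1 ∨ c 0 + c 1 + c 2 = 2 * max (max (c 0) (c 1)) (c 2)
      then 2 else 1 :=
  stmt_5_general q hqe c hc
end

section
/- Let q ≥ 2 be an even integer, ζ = exp(2πi/(q+1)), and c_1, c_2 integers with 1 ≤ c_i ≤ q/2. Then (q-1)/(q+1) - (1/(q+1)) Σ_{k=1}^{q/2} (ζ^{k c_1} + ζ^{-k c_1})(ζ^{k c_2} + ζ^{-k c_2}) equals 0 if c_1 = c_2 and equals 1 if c_1 ≠ c_2. -/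
/-! With ζ a primitive (q+1)-th root of unity, q = 2h, the product-to-sum identity
(ζ^{kc₁} + ζ^{-kc₁})(ζ^{kc₂} + ζ^{-kc₂}) = (x^k + x^{-k}) + (y^k + y^{-k}) for x = ζ^{c₁+c₂},
y = ζ^{c₁-c₂} splits the sum in two. For a (2h+1)-th root of unity x ≠ 1 the symmetric sum
S = ∑_{k=1}^h (x^k + x^{-k}) telescopes to (x - 1) S = x^{h+1} - x^{-h} - x + 1 = 1 - x, so S = -1,
while for x = 1 it is 2h = q. Since 0 < c₁ + c₂ ≤ q and |c₁ - c₂| < q, only y can equal 1,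
exactly when c₁ = c₂. -/

open Finset

section

variable {K : Type*} [Field K]

theorem sub_one_mul_sum_Icc_zpow_add_zpow_neg {x : K} (hx : x ≠ 0) (n : ℕ) :
    (x - 1) * ∑ k ∈ Icc 1 n, (x ^ (k : ℤ) + x ^ (-(k : ℤ))) =
      x ^ (n + 1) - x ^ (-(n : ℤ)) - x + 1 := by
  induction n with
  | zero => simp
  | succ n ih =>
    rw [sum_Icc_succ_top (by omega), mul_add, ih]
    simp only [zpow_neg, zpow_natCast]
    field_simp
    ring

theorem sum_Icc_zpow_add_zpow_neg_eq_neg_one {x : K} {h : ℕ} (hx : x ^ (2 * h + 1) = 1)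
    (hx1 : x ≠ 1) : ∑ k ∈ Icc 1 h, (x ^ (k : ℤ) + x ^ (-(k : ℤ))) = -1 := by
  have hx0 : x ≠ 0 := by rintro rfl; simp at hx
  have hinv : x ^ (h + 1) = x ^ (-(h : ℤ)) := by
    rw [zpow_neg, zpow_natCast]
    exact eq_inv_of_mul_eq_one_left (by rw [← pow_add, ← hx]; ring_nf)
  apply mul_left_cancel₀ (sub_ne_zero.mpr hx1)
  rw [sub_one_mul_sum_Icc_zpow_add_zpow_neg hx0, hinv]
  ring

theorem zpow_mul_add_zpow_neg_mul_mul {ζ : K} (hζ : ζ ≠ 0) (a b k : ℤ) :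
    (ζ ^ (k * a) + ζ ^ (-(k * a))) * (ζ ^ (k * b) + ζ ^ (-(k * b))) =
      ((ζ ^ (a + b)) ^ k + (ζ ^ (a + b)) ^ (-k)) + ((ζ ^ (a - b)) ^ k + (ζ ^ (a - b)) ^ (-k)) := by
  simp only [← zpow_mul, add_mul, mul_add, ← zpow_add₀ hζ]
  ring_nf

theorem IsPrimitiveRoot.sum_Icc_zpow_add_zpow_neg_eq_neg_one {ζ : K}
    {h : ℕ} (hζ : IsPrimitiveRoot ζ (2 * h + 1)) {a : ℤ} (ha : ¬ ((2 * h + 1 : ℕ) : ℤ) ∣ a) :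
    ∑ k ∈ Icc 1 h, ((ζ ^ a) ^ (k : ℤ) + (ζ ^ a) ^ (-(k : ℤ))) = -1 := by
  refine _root_.sum_Icc_zpow_add_zpow_neg_eq_neg_one ?_
    fun h1 => ha ((hζ.zpow_eq_one_iff_dvd a).mp h1)
  rw [← zpow_natCast, ← zpow_mul, mul_comm, zpow_mul, zpow_natCast, hζ.pow_eq_one, one_zpow]

end

theorem stmt_6_general (q : ℕ) (hqe : Even q) (c₁ c₂ : ℕ)
    (hc₁ : 1 ≤ c₁ ∧ c₁ ≤ q / 2) (hc₂ : 1 ≤ c₂ ∧ c₂ ≤ q / 2) :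
    ((q : ℂ) - 1) / ((q : ℂ) + 1)
        - (1 / ((q : ℂ) + 1)) * ∑ k ∈ Finset.Icc 1 (q / 2),
            (Complex.exp (2 * Real.pi * Complex.I / (q + 1)) ^ ((k : ℤ) * (c₁ : ℤ)) +
             Complex.exp (2 * Real.pi * Complex.I / (q + 1)) ^ (-((k : ℤ) * (c₁ : ℤ)))) *
            (Complex.exp (2 * Real.pi * Complex.I / (q + 1)) ^ ((k : ℤ) * (c₂ : ℤ)) +
             Complex.exp (2 * Real.pi * Complex.I / (q + 1)) ^ (-((k : ℤ) * (c₂ : ℤ)))) =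
      if c₁ = c₂ then 0 else 1 := by
  obtain ⟨h, rfl⟩ := hqe
  have hh : (h + h) / 2 = h := by omega
  rw [hh] at hc₁ hc₂ ⊢
  set ζ := Complex.exp (2 * Real.pi * Complex.I / ((h + h : ℕ) + 1))
  have hζ : IsPrimitiveRoot ζ (2 * h + 1) := by
    convert Complex.isPrimitiveRoot_exp (2 * h + 1) (by omega) using 3
    push_cast; ring
  have not_dvd : ∀ a : ℤ, a ≠ 0 → |a| ≤ 2 * h → ¬ ((2 * h + 1 : ℕ) : ℤ) ∣ a := fun a ha hle hd =>
    ha (Int.eq_zero_of_abs_lt_dvd hd (by push_cast; omega))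
  rw [sum_congr rfl fun (k : ℕ) _ =>
      zpow_mul_add_zpow_neg_mul_mul (hζ.ne_zero (by omega)) c₁ c₂ (k : ℤ),
    sum_add_distrib, hζ.sum_Icc_zpow_add_zpow_neg_eq_neg_one
      (not_dvd _ (by omega) (by rw [abs_of_nonneg (by positivity)]; omega))]
  have hq0 : ((h + h : ℕ) : ℂ) + 1 ≠ 0 := Nat.cast_add_one_ne_zero _
  split_ifs with hc
  · simp only [hc, sub_self, zpow_zero, one_zpow, sum_const, Nat.card_Icc, add_tsub_cancel_right,
      nsmul_eq_mul, Nat.cast_add]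
    field_simp
    ring
  · rw [hζ.sum_Icc_zpow_add_zpow_neg_eq_neg_one
      (not_dvd _ (by omega) (abs_le.mpr ⟨by omega, by omega⟩))]
    field_simp
    ring

theorem stmt_6 (q : ℕ) (hq : 2 ≤ q) (hqe : Even q) (c₁ c₂ : ℕ)
    (hc₁ : 1 ≤ c₁ ∧ c₁ ≤ q / 2) (hc₂ : 1 ≤ c₂ ∧ c₂ ≤ q / 2) :
    ((q : ℂ) - 1) / ((q : ℂ) + 1)
        - (1 / ((q : ℂ) + 1)) * ∑ k ∈ Finset.Icc 1 (q / 2),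
            (Complex.exp (2 * Real.pi * Complex.I / (q + 1)) ^ ((k : ℤ) * (c₁ : ℤ)) +
             Complex.exp (2 * Real.pi * Complex.I / (q + 1)) ^ (-((k : ℤ) * (c₁ : ℤ)))) *
            (Complex.exp (2 * Real.pi * Complex.I / (q + 1)) ^ ((k : ℤ) * (c₂ : ℤ)) +
             Complex.exp (2 * Real.pi * Complex.I / (q + 1)) ^ (-((k : ℤ) * (c₂ : ℤ)))) =
      if c₁ = c₂ then 0 else 1 :=
  stmt_6_general q hqe c₁ c₂ hc₁ hc₂
end

section
/- For every real number q ≥ 2: 1/(q²(q²-1)²) + 1/q² + (q-2)/(2(q-1)²) + q/(2(q+1)²) = (q⁵ - q³ - 3q² + 2)/(q²(q²-1)²), and this quantity is strictly less than 1/2. -/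
/-! Clearing denominators, the inequality becomes `f(q) > 0` for
`f = q²(q²-1)² - 2(q⁵ - q³ - 3q² + 2)`, and `f(2 + t)` is a polynomial in `t` with
positive coefficients. -/

theorem inv_sq_codegree_sum_eq {q : ℝ} (h₀ : q ≠ 0) (h₁ : q - 1 ≠ 0) (h₂ : q + 1 ≠ 0) :
    1 / (q ^ 2 * (q ^ 2 - 1) ^ 2) + 1 / q ^ 2 + (q - 2) / (2 * (q - 1) ^ 2)
        + q / (2 * (q + 1) ^ 2) =
      (q ^ 5 - q ^ 3 - 3 * q ^ 2 + 2) / (q ^ 2 * (q ^ 2 - 1) ^ 2) := by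
  have h : q ^ 2 - 1 ≠ 0 := by
    rw [show q ^ 2 - 1 = (q - 1) * (q + 1) by ring]
    exact mul_ne_zero h₁ h₂
  field_simp
  ring

theorem two_mul_codegree_numerator_lt {q : ℝ} (hq : 2 ≤ q) :
    2 * (q ^ 5 - q ^ 3 - 3 * q ^ 2 + 2) < q ^ 2 * (q ^ 2 - 1) ^ 2 := by
  obtain ⟨t, ht, rfl⟩ : ∃ t : ℝ, 0 ≤ t ∧ q = 2 + t := ⟨q - 2, by linarith, by ring⟩
  have expand : (2 + t) ^ 2 * ((2 + t) ^ 2 - 1) ^ 2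
      - 2 * ((2 + t) ^ 5 - (2 + t) ^ 3 - 3 * (2 + t) ^ 2 + 2)
      = t ^ 6 + 10 * t ^ 5 + 38 * t ^ 4 + 66 * t ^ 3 + 51 * t ^ 2 + 20 * t + 8 := by ring
  have : 0 < t ^ 6 + 10 * t ^ 5 + 38 * t ^ 4 + 66 * t ^ 3 + 51 * t ^ 2 + 20 * t + 8 := by
    positivity
  linarith

theorem stmt_9 (q : ℝ) (hq : 2 ≤ q) :
    (1 / (q ^ 2 * (q ^ 2 - 1) ^ 2) + 1 / q ^ 2 + (q - 2) / (2 * (q - 1) ^ 2)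
        + q / (2 * (q + 1) ^ 2) =
      (q ^ 5 - q ^ 3 - 3 * q ^ 2 + 2) / (q ^ 2 * (q ^ 2 - 1) ^ 2)) ∧
    (q ^ 5 - q ^ 3 - 3 * q ^ 2 + 2) / (q ^ 2 * (q ^ 2 - 1) ^ 2) < 1 / 2 := by
  have hden : 0 < q ^ 2 * (q ^ 2 - 1) ^ 2 := by
    have : 0 < q ^ 2 - 1 := by nlinarith
    positivity
  refine ⟨inv_sq_codegree_sum_eq (by linarith) (by linarith) (by linarith), ?_⟩
  rw [div_lt_div_iff₀ hden two_pos]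
  linarith [two_mul_codegree_numerator_lt hq]
end

section
/- Let q ≥ 6 be an integer. There is no integer c with 1 ≤ c ≤ q/2 such that for every integer k with 1 ≤ k ≤ q/2 one has 2cos(2πkc/(q+1)) ∈ {1, -1}. -/
/-! If `2 cos θ = ±1` then `4 cos² θ = 1`, so the triple-angle formula gives
`2 cos 3θ = -2 (2 cos θ) = ∓2`; hence the condition already fails at `k = 3` once `c` passes it
at `k = 1`, and `q ≥ 6` makes `k = 3` admissible. -/

open Real

lemma Real.cos_three_mul_of_four_mul_cos_sq_eq_one {x : ℝ} (h : 4 * cos x ^ 2 = 1) :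
    cos (3 * x) = -2 * cos x := by
  rw [cos_three_mul]
  linear_combination cos x * h

theorem stmt_12 (q : ℕ) (hq : 6 ≤ q) :
    ¬ ∃ c : ℕ, 1 ≤ c ∧ c ≤ q / 2 ∧ ∀ k : ℕ, 1 ≤ k → k ≤ q / 2 →
        (2 * Real.cos (2 * Real.pi * k * c / (q + 1)) = 1 ∨
         2 * Real.cos (2 * Real.pi * k * c / (q + 1)) = -1) := by
  rintro ⟨c, -, -, h⟩
  set θ : ℝ := 2 * π * c / (q + 1)
  have h1 : 2 * cos θ = 1 ∨ 2 * cos θ = -1 := by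
    simpa [θ] using h 1 le_rfl (by omega)
  have h3 : 2 * cos (3 * θ) = 1 ∨ 2 * cos (3 * θ) = -1 := by
    convert h 3 (by norm_num) (by omega) using 4 <;> push_cast [θ] <;> ring
  have hsq : 4 * cos θ ^ 2 = 1 := by
    rcases h1 with h1 | h1 <;> nlinarith
  rw [cos_three_mul_of_four_mul_cos_sq_eq_one hsq] at h3
  rcases h1 with h1 | h1 <;> rcases h3 with h3 | h3 <;> linarith
end

section
/- Let r ≥ 1 and let N : Fin r → Fin r → Fin r → ℕ be fusion rules with distinguished unit index 1, satisfying: N(1,i,k) = N(i,1,k) = δ_{i,k} (neutral), there is an involution * on indices with N(i,k,1) = N(k,i,1) = δ_{i*,k} (dual), and Frobenius reciprocity N(i,j,k) = N(i*,k,j) = N(k,j*,i). Suppose indices i_1,...,i_9 satisfy N(i_4,i_1,i_6), N(i_5,i_4,i_2), N(i_5,i_6,i_3), N(i_7,i_9,i_1), N(i_2,i_7,i_8), N(i_8,i_9,i_3) all nonzero, and Σ_k N(i_4,i_7,k)·N(i_5*,i_8,k)·N(i_6,i_9*,k) = 0. Then i_j ≠ 1 for all j ∈ {4,5,6,7,8,9}.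 -/
/-!
If one of `i₄, …, i₉` is the unit, the two nonzero structure constants containing it force an
equality between two of the other indices. Frobenius reciprocity then turns the remaining
nonzero constants into the two nontrivial factors of a single term of the sum, the third
factor being `N(1, k, k) = 1` (or a rotation of it), so the sum cannot vanish.
-/

structure FusionRules (ι : Type*) [DecidableEq ι] where
  N : ι → ι → ι → ℕ
  unit : ι
  dual : ι → ι
  dual_dual : ∀ i, dual (dual i) = i
  N_unit_left : ∀ i k, N unit i k = if i = k then 1 else 0
  N_unit_right : ∀ i k, N i unit k = if i = k then 1 else 0
  N_eq_unit : ∀ i k, N i k unit = if dual i = k then 1 else 0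
  frob_left : ∀ i j k, N i j k = N (dual i) k j
  frob_right : ∀ i j k, N i j k = N k (dual j) i

namespace FusionRules

variable {ι : Type*} [DecidableEq ι] (F : FusionRules ι) {i k : ι}

theorem eq_of_N_unit_left_ne_zero (h : F.N F.unit i k ≠ 0) : i = k := by
  by_contra hne
  exact h (by rw [F.N_unit_left, if_neg hne])

theorem eq_of_N_unit_right_ne_zero (h : F.N i F.unit k ≠ 0) : i = k := by
  by_contra hne
  exact h (by rw [F.N_unit_right, if_neg hne])

theorem dual_eq_of_N_eq_unit_ne_zero (h : F.N i k F.unit ≠ 0) : F.dual i = k := by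
  by_contra hne
  exact h (by rw [F.N_eq_unit, if_neg hne])

theorem dual_unit : F.dual F.unit = F.unit :=
  F.dual_eq_of_N_eq_unit_ne_zero (by simp [F.N_unit_left])

theorem exists_N_ne_zero_of_unit_mem {i1 i2 i3 i4 i5 i6 i7 i8 i9 : ι}
    (h1 : F.N i4 i1 i6 ≠ 0) (h2 : F.N i5 i4 i2 ≠ 0) (h3 : F.N i5 i6 i3 ≠ 0)
    (h4 : F.N i7 i9 i1 ≠ 0) (h5 : F.N i2 i7 i8 ≠ 0) (h6 : F.N i8 i9 i3 ≠ 0)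
    (hu : F.unit ∈ ({i4, i5, i6, i7, i8, i9} : Set ι)) :
    ∃ k, F.N i4 i7 k ≠ 0 ∧ F.N (F.dual i5) i8 k ≠ 0 ∧ F.N i6 (F.dual i9) k ≠ 0 := by
  rcases hu with rfl | rfl | rfl | rfl | rfl | rfl
  · obtain rfl := F.eq_of_N_unit_left_ne_zero h1
    obtain rfl := F.eq_of_N_unit_right_ne_zero h2
    refine ⟨i7, by simp [F.N_unit_left], ?_, ?_⟩
    · rwa [← F.frob_left]
    · rwa [← F.frob_right]
  · obtain rfl := F.eq_of_N_unit_left_ne_zero h2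
    obtain rfl := F.eq_of_N_unit_left_ne_zero h3
    refine ⟨i8, h5, by simp [F.dual_unit, F.N_unit_left], ?_⟩
    rwa [← F.frob_right]
  · obtain rfl := F.dual_eq_of_N_eq_unit_ne_zero h1
    obtain rfl := F.eq_of_N_unit_right_ne_zero h3
    refine ⟨F.dual i9, ?_, ?_, by simp [F.N_unit_left]⟩
    · rwa [F.frob_left, ← F.frob_right]
    · rwa [F.frob_left, F.dual_dual, ← F.frob_right]
  · obtain rfl := F.eq_of_N_unit_left_ne_zero h4
    obtain rfl := F.eq_of_N_unit_right_ne_zero h5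
    refine ⟨i4, by simp [F.N_unit_right], ?_, ?_⟩
    · rwa [← F.frob_left]
    · rwa [← F.frob_right]
  · obtain rfl := F.dual_eq_of_N_eq_unit_ne_zero h5
    obtain rfl := F.eq_of_N_unit_left_ne_zero h6
    refine ⟨F.dual i5, ?_, by simp [F.N_unit_right], ?_⟩
    · rwa [F.frob_right, F.dual_dual, ← F.frob_left]
    · rwa [F.frob_right, F.dual_dual, ← F.frob_left]
  · obtain rfl := F.eq_of_N_unit_right_ne_zero h4
    obtain rfl := F.eq_of_N_unit_right_ne_zero h6
    refine ⟨i6, h1, ?_, by simp [F.dual_unit, F.N_unit_right]⟩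
    rwa [← F.frob_left]

theorem ne_unit_of_sum_eq_zero [Fintype ι] {i1 i2 i3 i4 i5 i6 i7 i8 i9 : ι}
    (h1 : F.N i4 i1 i6 ≠ 0) (h2 : F.N i5 i4 i2 ≠ 0) (h3 : F.N i5 i6 i3 ≠ 0)
    (h4 : F.N i7 i9 i1 ≠ 0) (h5 : F.N i2 i7 i8 ≠ 0) (h6 : F.N i8 i9 i3 ≠ 0)
    (hz : ∑ k, F.N i4 i7 k * F.N (F.dual i5) i8 k * F.N i6 (F.dual i9) k = 0) :
    i4 ≠ F.unit ∧ i5 ≠ F.unit ∧ i6 ≠ F.unit ∧ i7 ≠ F.unit ∧ i8 ≠ F.unit ∧ i9 ≠ F.unit := by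
  have hu : F.unit ∉ ({i4, i5, i6, i7, i8, i9} : Set ι) := by
    intro hu
    obtain ⟨k, hk4, hk5, hk6⟩ := F.exists_N_ne_zero_of_unit_mem h1 h2 h3 h4 h5 h6 hu
    exact mul_ne_zero (mul_ne_zero hk4 hk5) hk6 (Finset.sum_eq_zero_iff.mp hz k (Finset.mem_univ k))
  simpa only [Set.mem_insert_iff, Set.mem_singleton_iff, not_or, @eq_comm _ F.unit] using hu

end FusionRules

theorem stmt_13_general (r : ℕ) (N : Fin r → Fin r → Fin r → ℕ)
    (u : Fin r) (st : Fin r → Fin r)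
    (hst : ∀ i, st (st i) = i)
    (hneut : ∀ i k, N u i k = if i = k then 1 else 0)
    (hneut' : ∀ i k, N i u k = if i = k then 1 else 0)
    (hdual : ∀ i k, N i k u = if st i = k then 1 else 0)
    (hfrob : ∀ i j k, N i j k = N (st i) k j ∧ N i j k = N k (st j) i)
    (i1 i2 i3 i4 i5 i6 i7 i8 i9 : Fin r)
    (h1 : N i4 i1 i6 ≠ 0) (h2 : N i5 i4 i2 ≠ 0) (h3 : N i5 i6 i3 ≠ 0)
    (h4 : N i7 i9 i1 ≠ 0) (h5 : N i2 i7 i8 ≠ 0) (h6 : N i8 i9 i3 ≠ 0)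
    (hz : ∑ k, N i4 i7 k * N (st i5) i8 k * N i6 (st i9) k = 0) :
    i4 ≠ u ∧ i5 ≠ u ∧ i6 ≠ u ∧ i7 ≠ u ∧ i8 ≠ u ∧ i9 ≠ u :=
  FusionRules.ne_unit_of_sum_eq_zero
    ⟨N, u, st, hst, hneut, hneut', hdual, fun i j k => (hfrob i j k).1, fun i j k => (hfrob i j k).2⟩
    h1 h2 h3 h4 h5 h6 hz

theorem stmt_13 (r : ℕ) (hr : 1 ≤ r) (N : Fin r → Fin r → Fin r → ℕ)
    (u : Fin r) (st : Fin r → Fin r)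
    (hst : ∀ i, st (st i) = i)
    (hneut : ∀ i k, N u i k = if i = k then 1 else 0)
    (hneut' : ∀ i k, N i u k = if i = k then 1 else 0)
    (hdual : ∀ i k, N i k u = if st i = k then 1 else 0)
    (hdual' : ∀ i k, N k i u = if st i = k then 1 else 0)
    (hfrob : ∀ i j k, N i j k = N (st i) k j ∧ N i j k = N k (st j) i)
    (i1 i2 i3 i4 i5 i6 i7 i8 i9 : Fin r)
    (h1 : N i4 i1 i6 ≠ 0) (h2 : N i5 i4 i2 ≠ 0) (h3 : N i5 i6 i3 ≠ 0)
    (h4 : N i7 i9 i1 ≠ 0) (h5 : N i2 i7 i8 ≠ 0) (h6 : N i8 i9 i3 ≠ 0)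
    (hz : ∑ k, N i4 i7 k * N (st i5) i8 k * N i6 (st i9) k = 0) :
    i4 ≠ u ∧ i5 ≠ u ∧ i6 ≠ u ∧ i7 ≠ u ∧ i8 ≠ u ∧ i9 ≠ u :=
  stmt_13_general r N u st hst hneut hneut' hdual hfrob i1 i2 i3 i4 i5 i6 i7 i8 i9 h1 h2 h3 h4 h5 h6
    hz
end

section
/- Let r ≥ 1 and let N : Fin r → Fin r → Fin r → ℕ be fusion rules with unit index 1 satisfying the neutral, dual, and Frobenius reciprocity axioms. Assume there exists an index k_0 such that N(i,j,k_0) ≠ 0 for all i,j ≠ 1. Then there do not exist indices i_1,...,i_9 satisfying simultaneously: N(i_4,i_1,i_6), N(i_5,i_4,i_2), N(i_5,i_6,i_3), N(i_7,i_9,i_1), N(i_2,i_7,i_8), N(i_8,i_9,i_3) all nonzero, and Σ_k N(i_4,i_7,k)·N(i_5*,i_8,k)·N(i_6,i_9*,k) = 0. -/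
structure IsFusionRules {ι : Type*} [DecidableEq ι] (N : ι → ι → ι → ℕ) (u : ι) (st : ι → ι) :
    Prop where
  unit_mul : ∀ i k, N u i k = if i = k then 1 else 0
  mul_unit : ∀ i k, N i u k = if i = k then 1 else 0
  frobenius_left : ∀ i j k, N i j k = N (st i) k j
  frobenius_right : ∀ i j k, N i j k = N k (st j) i

namespace IsFusionRules

variable {ι : Type*} [DecidableEq ι] {N : ι → ι → ι → ℕ} {u : ι} {st : ι → ι}

theorem unit_mul_ne_zero_iff (hN : IsFusionRules N u st) {i k : ι} : N u i k ≠ 0 ↔ i = k := by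
  simp [hN.unit_mul]

theorem mul_unit_ne_zero_iff (hN : IsFusionRules N u st) {i k : ι} : N i u k ≠ 0 ↔ i = k := by
  simp [hN.mul_unit]

theorem mul_apply_unit_ne_zero_iff (hN : IsFusionRules N u st) {i k : ι} :
    N i k u ≠ 0 ↔ st i = k := by
  rw [hN.frobenius_left]
  exact hN.mul_unit_ne_zero_iff

theorem st_eq_unit_iff (hN : IsFusionRules N u st) {i : ι} : st i = u ↔ i = u := by
  rw [← hN.mul_apply_unit_ne_zero_iff, hN.mul_unit_ne_zero_iff]

theorem st_unit (hN : IsFusionRules N u st) : st u = u :=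
  hN.st_eq_unit_iff.2 rfl

/-- If one of the six outer labels is the unit, two of the six fusion channels collapse to
equalities and Frobenius reciprocity moves the remaining ones onto a common channel; otherwise
`k₀` is such a channel. -/
theorem exists_common_channel (hN : IsFusionRules N u st) {k₀ : ι}
    (hk₀ : ∀ i j, i ≠ u → j ≠ u → N i j k₀ ≠ 0) {i1 i2 i3 i4 i5 i6 i7 i8 i9 : ι}
    (h1 : N i4 i1 i6 ≠ 0) (h2 : N i5 i4 i2 ≠ 0) (h3 : N i5 i6 i3 ≠ 0)
    (h4 : N i7 i9 i1 ≠ 0) (h5 : N i2 i7 i8 ≠ 0) (h6 : N i8 i9 i3 ≠ 0) :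
    ∃ k, N i4 i7 k ≠ 0 ∧ N (st i5) i8 k ≠ 0 ∧ N i6 (st i9) k ≠ 0 := by
  by_cases e4 : i4 = u
  · subst e4
    obtain rfl : i1 = i6 := hN.unit_mul_ne_zero_iff.1 h1
    obtain rfl : i5 = i2 := hN.mul_unit_ne_zero_iff.1 h2
    refine ⟨i7, hN.unit_mul_ne_zero_iff.2 rfl, ?_, ?_⟩
    · rwa [← hN.frobenius_left]
    · rwa [← hN.frobenius_right]
  by_cases e7 : i7 = u
  · subst e7
    obtain rfl : i9 = i1 := hN.unit_mul_ne_zero_iff.1 h4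
    obtain rfl : i2 = i8 := hN.mul_unit_ne_zero_iff.1 h5
    refine ⟨i4, hN.mul_unit_ne_zero_iff.2 rfl, ?_, ?_⟩
    · rwa [← hN.frobenius_left]
    · rwa [← hN.frobenius_right]
  by_cases e5 : i5 = u
  · subst e5
    obtain rfl : i4 = i2 := hN.unit_mul_ne_zero_iff.1 h2
    obtain rfl : i6 = i3 := hN.unit_mul_ne_zero_iff.1 h3
    refine ⟨i8, h5, ?_, ?_⟩
    · rw [hN.st_unit]; exact hN.unit_mul_ne_zero_iff.2 rfl
    · rwa [← hN.frobenius_right]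
  by_cases e8 : i8 = u
  · subst e8
    obtain rfl : st i2 = i7 := hN.mul_apply_unit_ne_zero_iff.1 h5
    obtain rfl : i9 = i3 := hN.unit_mul_ne_zero_iff.1 h6
    refine ⟨st i5, ?_, hN.mul_unit_ne_zero_iff.2 rfl, ?_⟩
    · rwa [← hN.frobenius_right, ← hN.frobenius_left]
    · rwa [← hN.frobenius_right, ← hN.frobenius_left]
  by_cases e6 : i6 = u
  · subst e6
    obtain rfl : st i4 = i1 := hN.mul_apply_unit_ne_zero_iff.1 h1
    obtain rfl : i5 = i3 := hN.mul_unit_ne_zero_iff.1 h3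
    refine ⟨st i9, ?_, ?_, hN.unit_mul_ne_zero_iff.2 rfl⟩
    · rwa [hN.frobenius_left, ← hN.frobenius_right]
    · rwa [← hN.frobenius_left, ← hN.frobenius_right]
  by_cases e9 : i9 = u
  · subst e9
    obtain rfl : i7 = i1 := hN.mul_unit_ne_zero_iff.1 h4
    obtain rfl : i8 = i3 := hN.mul_unit_ne_zero_iff.1 h6
    refine ⟨i6, h1, ?_, ?_⟩
    · rwa [← hN.frobenius_left]
    · rw [hN.st_unit]; exact hN.mul_unit_ne_zero_iff.2 rfl
  exact ⟨k₀, hk₀ _ _ e4 e7, hk₀ _ _ (mt hN.st_eq_unit_iff.1 e5) e8,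
    hk₀ _ _ e6 (mt hN.st_eq_unit_iff.1 e9)⟩

end IsFusionRules

theorem stmt_14_general (r : ℕ) (N : Fin r → Fin r → Fin r → ℕ)
    (u : Fin r) (st : Fin r → Fin r)
    (hneut : ∀ i k, N u i k = if i = k then 1 else 0)
    (hneut' : ∀ i k, N i u k = if i = k then 1 else 0)
    (hfrob : ∀ i j k, N i j k = N (st i) k j ∧ N i j k = N k (st j) i)
    (k₀ : Fin r) (hk₀ : ∀ i j, i ≠ u → j ≠ u → N i j k₀ ≠ 0) :
    ¬ ∃ i1 i2 i3 i4 i5 i6 i7 i8 i9 : Fin r,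
        N i4 i1 i6 ≠ 0 ∧ N i5 i4 i2 ≠ 0 ∧ N i5 i6 i3 ≠ 0 ∧
        N i7 i9 i1 ≠ 0 ∧ N i2 i7 i8 ≠ 0 ∧ N i8 i9 i3 ≠ 0 ∧
        ∑ k, N i4 i7 k * N (st i5) i8 k * N i6 (st i9) k = 0 := by
  have hN : IsFusionRules N u st :=
    ⟨hneut, hneut', fun i j k => (hfrob i j k).1, fun i j k => (hfrob i j k).2⟩
  rintro ⟨i1, i2, i3, i4, i5, i6, i7, i8, i9, h1, h2, h3, h4, h5, h6, hsum⟩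
  obtain ⟨k, hk₁, hk₂, hk₃⟩ := hN.exists_common_channel hk₀ h1 h2 h3 h4 h5 h6
  exact mul_ne_zero (mul_ne_zero hk₁ hk₂) hk₃
    (Finset.sum_eq_zero_iff.1 hsum k (Finset.mem_univ k))

theorem stmt_14 (r : ℕ) (hr : 1 ≤ r) (N : Fin r → Fin r → Fin r → ℕ)
    (u : Fin r) (st : Fin r → Fin r)
    (hst : ∀ i, st (st i) = i)
    (hneut : ∀ i k, N u i k = if i = k then 1 else 0)
    (hneut' : ∀ i k, N i u k = if i = k then 1 else 0)
    (hdual : ∀ i k, N i k u = if st i = k then 1 else 0)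
    (hdual' : ∀ i k, N k i u = if st i = k then 1 else 0)
    (hfrob : ∀ i j k, N i j k = N (st i) k j ∧ N i j k = N k (st j) i)
    (k₀ : Fin r) (hk₀ : ∀ i j, i ≠ u → j ≠ u → N i j k₀ ≠ 0) :
    ¬ ∃ i1 i2 i3 i4 i5 i6 i7 i8 i9 : Fin r,
        N i4 i1 i6 ≠ 0 ∧ N i5 i4 i2 ≠ 0 ∧ N i5 i6 i3 ≠ 0 ∧
        N i7 i9 i1 ≠ 0 ∧ N i2 i7 i8 ≠ 0 ∧ N i8 i9 i3 ≠ 0 ∧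
        ∑ k, N i4 i7 k * N (st i5) i8 k * N i6 (st i9) k = 0 :=
  stmt_14_general r N u st hneut hneut' hfrob k₀ hk₀
end

section
/- Let q ≥ 2 be an even integer. For integers c_1, c_2, c_3, c_4 with 1 ≤ c_i ≤ q/2, define F(c_1,c_2,c_3,c_4) = δ_{c_1,c_2}δ_{c_3,c_4} - #{ |q+1-2|x|| : x ∈ {c_1+c_2, c_3+c_4, c_1-c_2, c_3-c_4} } (where the cardinality is of the set of distinct values). Then F is invariant under every permutation of (c_1,c_2,c_3,c_4). -/
/-!
Put `g x = |q + 1 - 2|x||`. Since `|N - 2x| = |N - 2y|` iff `x = y` or `x + y = N`, a coincidence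
`g α = g β` with `α ∈ {c₁ ± c₂}`, `β ∈ {c₃ ± c₄}` is the same as a choice of signs making
`±α ± β` equal to `0` or `±(q + 1)`; two values coming from the same pair never coincide because
`q + 1` is odd, and the term `δδ` compensates for `α = β = 0`, where all four sign choices vanish.
Counting distinct values therefore gives `2F + 8 = #{ε ∈ {±1}⁴ | ∑ εᵢcᵢ ∈ {0, ±(q + 1)}}`,
which is visibly invariant under permuting the `cᵢ`.
-/

open Finset

def fusionDefect (q : ℤ) (d : Fin 4 → ℤ) : ℤ :=
  (if d 0 = d 1 then (1 : ℤ) else 0) * (if d 2 = d 3 then 1 else 0)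
    - (({d 0 + d 1, d 2 + d 3, d 0 - d 1, d 2 - d 3} : Finset ℤ).image
        (fun x => abs (q + 1 - 2 * abs x))).card

theorem card_four_eq_four_sub {α : Type*} [DecidableEq α] {x y z w : α} (hxz : x ≠ z)
    (hyw : y ≠ w) :
    (#{x, y, z, w} : ℤ) =
      4 - ((if x = y then 1 else 0) + (if x = w then 1 else 0) +
        (if z = y then 1 else 0) + (if z = w then 1 else 0)) := by
  by_cases x = y <;> by_cases x = w <;> by_cases z = y <;> by_cases z = w <;>
    subst_vars <;> simp_all [eq_comm]

section SignCount

variable {ι : Type*} [Fintype ι] [DecidableEq ι] (p : ℤ → Prop) [DecidablePred p]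

def signCount (c : ι → ℤ) : ℕ := #{ε : ι → ℤˣ | p (∑ i, (ε i : ℤ) * c i)}

theorem signCount_comp_perm (c : ι → ℤ) (σ : Equiv.Perm ι) :
    signCount p (c ∘ σ) = signCount p c := by
  refine card_equiv (σ.arrowCongr (Equiv.refl ℤˣ)) fun ε => ?_
  simp only [mem_filter, mem_univ, true_and]
  conv_rhs => rw [← Equiv.sum_comp σ]
  simp

end SignCount

/-- A sign vector `(ε₀, ε₁, ε₂, ε₃)` is recorded as the relative signs `(ε₀ε₁, ε₂ε₃)` of the two
pairs together with their leading signs `(ε₀, ε₂)`. -/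
def finFourSignsEquiv : (ℤˣ × ℤˣ) × (ℤˣ × ℤˣ) ≃ (Fin 4 → ℤˣ) where
  toFun x := ![x.2.1, x.2.1 * x.1.1, x.2.2, x.2.2 * x.1.2]
  invFun ε := ((ε 0 * ε 1, ε 2 * ε 3), (ε 0, ε 2))
  left_inv x := by simp [← mul_assoc, Int.units_mul_self]
  right_inv ε := by ext i; fin_cases i <;> simp [← mul_assoc, Int.units_mul_self]

theorem signCount_fin_four (p : ℤ → Prop) [DecidablePred p] (c : Fin 4 → ℤ) :
    signCount p c = ∑ r : ℤˣ × ℤˣ,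
      #{st : ℤˣ × ℤˣ | p (st.1 * (c 0 + r.1 * c 1) + st.2 * (c 2 + r.2 * c 3))} := by
  simp only [signCount, card_filter]
  rw [← Fintype.sum_prod_type', ← finFourSignsEquiv.sum_comp]
  refine Fintype.sum_congr _ _ fun x => ?_
  simp only [finFourSignsEquiv, Equiv.coe_fn_mk, Fin.sum_univ_four]
  simp only [Fin.isValue, Matrix.cons_val, Units.val_mul]
  congr 2
  ring

theorem abs_sub_two_mul_eq_abs_sub_two_mul_iff (N x y : ℤ) :
    |N - 2 * x| = |N - 2 * y| ↔ x = y ∨ x + y = N := by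
  rw [abs_eq_abs]; omega

theorem abs_sub_two_mul_abs_add_ne_abs_sub_two_mul_abs_sub (N a b : ℤ) (hN : Odd N)
    (ha : a ≠ 0) (hb : b ≠ 0) :
    abs (N - 2 * |a + b|) ≠ abs (N - 2 * |a - b|) := by
  rw [Ne, abs_sub_two_mul_eq_abs_sub_two_mul_iff]
  obtain ⟨k, rfl⟩ := hN
  have := abs_choice (a + b); have := abs_choice (a - b)
  have := abs_nonneg (a + b); have := abs_nonneg (a - b)
  omega

theorem card_signs_zero_or_abs_eq (N α β : ℤ) (hN : Odd N) (hα : |α| < N) (hβ : |β| < N) :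
    (#{st : ℤˣ × ℤˣ | st.1 * α + st.2 * β = 0 ∨ abs (st.1 * α + st.2 * β) = N} : ℤ) =
      2 * (if abs (N - 2 * |α|) = abs (N - 2 * |β|) then 1 else 0) +
        2 * (if α = 0 ∧ β = 0 then 1 else 0) := by
  simp only [card_filter, Fintype.sum_prod_type, UnitsInt.univ,
    sum_pair (show (1 : ℤˣ) ≠ -1 by decide), Units.val_one, Units.val_neg, one_mul, neg_mul]
  simp only [abs_sub_two_mul_eq_abs_sub_two_mul_iff, show -α + -β = -(α + β) by ring,
    show -α + β = -(α + -β) by ring, abs_neg, neg_eq_zero]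
  obtain ⟨k, rfl⟩ := hN
  have := abs_choice α; have := abs_choice β; have := abs_choice (α + β)
  have := abs_choice (α + -β)
  have := abs_nonneg α; have := abs_nonneg β; have := abs_nonneg (α + β)
  have := abs_nonneg (α + -β)
  split_ifs <;> push_cast <;> omega

theorem two_mul_fusionDefect_add_eight (q : ℤ) (hq : Even q) (c : Fin 4 → ℤ)
    (hc : ∀ i, 1 ≤ c i ∧ c i ≤ q / 2) :
    2 * fusionDefect q c + 8 = signCount (fun x => x = 0 ∨ |x| = q + 1) c := by
  have hN : Odd (q + 1) := hq.add_one
  have hbound : ∀ i j, |c i + c j| < q + 1 ∧ |c i - c j| < q + 1 := fun i j => by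
    have := hc i; have := hc j
    constructor <;> rw [abs_lt] <;> constructor <;> omega
  have hsum_ne : ∀ i j, c i + c j ≠ 0 := fun i j => by have := hc i; have := hc j; omega
  have hne : ∀ i, c i ≠ 0 := fun i => by have := hc i; omega
  have hδ : (if c 0 - c 1 = 0 ∧ c 2 - c 3 = 0 then 1 else 0 : ℤ) =
      (if c 0 = c 1 then 1 else 0) * (if c 2 = c 3 then 1 else 0) := by
    simp only [sub_eq_zero]; split_ifs <;> simp_all
  rw [signCount_fin_four]
  simp only [Fintype.sum_prod_type, UnitsInt.univ, sum_pair (show (1 : ℤˣ) ≠ -1 by decide),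
    Units.val_one, Units.val_neg, one_mul, neg_one_mul, ← sub_eq_add_neg]
  push_cast
  rw [card_signs_zero_or_abs_eq _ _ _ hN (hbound 0 1).1 (hbound 2 3).1,
    card_signs_zero_or_abs_eq _ _ _ hN (hbound 0 1).1 (hbound 2 3).2,
    card_signs_zero_or_abs_eq _ _ _ hN (hbound 0 1).2 (hbound 2 3).1,
    card_signs_zero_or_abs_eq _ _ _ hN (hbound 0 1).2 (hbound 2 3).2, hδ]
  rw [fusionDefect, image_insert, image_insert, image_insert, image_singleton,
    card_four_eq_four_sub
      (abs_sub_two_mul_abs_add_ne_abs_sub_two_mul_abs_sub _ _ _ hN (hne 0) (hne 1))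
      (abs_sub_two_mul_abs_add_ne_abs_sub_two_mul_abs_sub _ _ _ hN (hne 2) (hne 3))]
  simp only [hsum_ne, false_and, and_false, if_false]
  ring

theorem stmt_19_general (q : ℕ) (hqe : Even q) (c : Fin 4 → ℤ)
    (hc : ∀ i, 1 ≤ c i ∧ c i ≤ (q : ℤ) / 2) (σ : Equiv.Perm (Fin 4)) :
    (fun d : Fin 4 → ℤ =>
      (if d 0 = d 1 then (1 : ℤ) else 0) * (if d 2 = d 3 then 1 else 0)
        - (({d 0 + d 1, d 2 + d 3, d 0 - d 1, d 2 - d 3} : Finset ℤ).image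
            (fun x => abs ((q : ℤ) + 1 - 2 * abs x))).card) (c ∘ σ) =
    (fun d : Fin 4 → ℤ =>
      (if d 0 = d 1 then (1 : ℤ) else 0) * (if d 2 = d 3 then 1 else 0)
        - (({d 0 + d 1, d 2 + d 3, d 0 - d 1, d 2 - d 3} : Finset ℤ).image
            (fun x => abs ((q : ℤ) + 1 - 2 * abs x))).card) c := by
  show fusionDefect q (c ∘ σ) = fusionDefect q c
  have hq : Even (q : ℤ) := hqe.natCast
  have key := two_mul_fusionDefect_add_eight q hq c hc
  have key_σ := two_mul_fusionDefect_add_eight q hq (c ∘ σ) fun i => hc (σ i)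
  rw [signCount_comp_perm] at key_σ
  omega

theorem stmt_19 (q : ℕ) (hq : 2 ≤ q) (hqe : Even q) (c : Fin 4 → ℤ)
    (hc : ∀ i, 1 ≤ c i ∧ c i ≤ (q : ℤ) / 2) (σ : Equiv.Perm (Fin 4)) :
    (fun d : Fin 4 → ℤ =>
      (if d 0 = d 1 then (1 : ℤ) else 0) * (if d 2 = d 3 then 1 else 0)
        - (({d 0 + d 1, d 2 + d 3, d 0 - d 1, d 2 - d 3} : Finset ℤ).image
            (fun x => abs ((q : ℤ) + 1 - 2 * abs x))).card) (c ∘ σ) =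
    (fun d : Fin 4 → ℤ =>
      (if d 0 = d 1 then (1 : ℤ) else 0) * (if d 2 = d 3 then 1 else 0)
        - (({d 0 + d 1, d 2 + d 3, d 0 - d 1, d 2 - d 3} : Finset ℤ).image
            (fun x => abs ((q : ℤ) + 1 - 2 * abs x))).card) c :=
  stmt_19_general q hqe c hc σ
end
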